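/- arXiv:2502.07214 — 2 statements merged into one kernel-verified Lean document; each statement's English description precedes it below -/
import Mathlib

section
/- Completeness of the Pareto tables: for every iteration ℓ : ℕ and every vertex v : V, if Q is a walk from s to v with at most ℓ edges that is Pareto optimal in the set of all walks from s to v with at most ℓ edges, then cost(Q) ∈ D ℓ v. -/
open scoped NNReal

/-- A walk from `s` to `t`: a nonempty list of vertices starting at `s`,
ending at `t`, with `E u v` for every pair of consecutive vertices. -/
def IsWalk {V : Type*} (E : V → V → Prop) (s t : V) (l : List V) : Prop :=
  l ≠ [] ∧ l.head? = some s ∧ l.getLast? = some t ∧ l.Chain' E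

/-- The multi-cost of a walk: componentwise sum of edge weights over
consecutive pairs of vertices (a walk with no edges has cost `0`). -/
def walkCost {V : Type*} {k : ℕ} (w : V → V → Fin k → ℝ≥0) (l : List V) :
    Fin k → ℝ≥0 :=
  ((l.zip l.tail).map fun p => w p.1 p.2).sum

/-- The Pareto front: minimal elements of `S` w.r.t. the product order. -/
def paretoFront {k : ℕ} (S : Set (Fin k → ℝ≥0)) : Set (Fin k → ℝ≥0) :=
  {m | m ∈ S ∧ ¬ ∃ c ∈ S, c < m}

/-!
By induction on `ℓ`. Every entry of `D ℓ v` is the cost of a walk to `v` with at most `ℓ`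
edges, so the cost of a Pareto-optimal walk `Q` is minimal among the candidates for
`D (ℓ + 1) v`; it remains to see that it is a candidate. If `Q` has at most `ℓ` edges it is
Pareto optimal at level `ℓ`. Otherwise `Q` is a walk `P` to some `u` followed by the edge
`u v`, and `P` is Pareto optimal at level `ℓ`: translation by `w u v` preserves strict
domination, since addition in `ℝ≥0` cancels.
-/

section Walks

variable {V : Type*} {E : V → V → Prop} {s u v : V} {l : List V}

theorem isWalk_singleton (E : V → V → Prop) (s : V) : IsWalk E s s [s] :=
  ⟨List.cons_ne_nil s [], rfl, rfl, List.isChain_singleton s⟩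

theorem IsWalk.append_singleton (h : IsWalk E s u l) (he : E u v) :
    IsWalk E s v (l ++ [v]) := by
  obtain ⟨hne, hhead, hlast, hchain⟩ := h
  refine ⟨by simp, by rwa [List.head?_append_of_ne_nil _ hne], by simp, ?_⟩
  refine List.isChain_append.2 ⟨hchain, List.isChain_singleton v, ?_⟩
  simp_all

theorem IsWalk.eq_singleton (h : IsWalk E s v l) (hl : l.length ≤ 1) : l = [s] ∧ v = s := by
  obtain ⟨a, rfl⟩ := List.length_eq_one_iff.1 (le_antisymm hl (List.length_pos_iff.2 h.1))
  obtain ⟨-, hhead, hlast, -⟩ := h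
  simp_all

theorem IsWalk.exists_eq_append_singleton (h : IsWalk E s v l) (hl : 2 ≤ l.length) :
    ∃ u P, l = P ++ [v] ∧ IsWalk E s u P ∧ E u v := by
  obtain ⟨hne, hhead, hlast, hchain⟩ := h
  obtain ⟨P, x, rfl⟩ := (List.eq_nil_or_concat' l).resolve_left hne
  have hP : P ≠ [] := by rintro rfl; simp at hl
  obtain rfl : x = v := by simpa using hlast
  rw [List.head?_append_of_ne_nil _ hP] at hhead
  obtain ⟨hchainP, -, hlink⟩ := List.isChain_append.1 hchain
  have hPlast := List.getLast?_eq_some_getLast hP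
  exact ⟨P.getLast hP, P, rfl, ⟨hP, hhead, hPlast, hchainP⟩, hlink _ hPlast _ rfl⟩

end Walks

section Costs

variable {V : Type*} {k : ℕ} (w : V → V → Fin k → ℝ≥0)

theorem walkCost_cons_cons (a b : V) (l : List V) :
    walkCost w (a :: b :: l) = w a b + walkCost w (b :: l) := by
  simp [walkCost]

theorem walkCost_append_singleton {l : List V} {u : V} (v : V) (h : l.getLast? = some u) :
    walkCost w (l ++ [v]) = walkCost w l + w u v := by
  induction l with
  | nil => simp at h
  | cons a l ih =>
    cases l with
    | nil => simp_all [walkCost]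
    | cons b l =>
      rw [List.getLast?_cons_cons] at h
      rw [List.cons_append, List.cons_append, walkCost_cons_cons, ← List.cons_append, ih h,
        walkCost_cons_cons, add_assoc]

end Costs

section BoundedWalks

variable {V : Type*} (E : V → V → Prop) {k : ℕ} (w : V → V → Fin k → ℝ≥0) (s : V)

def boundedWalks (v : V) (ℓ : ℕ) : Set (List V) :=
  {Q | IsWalk E s v Q ∧ Q.length - 1 ≤ ℓ}

def IsParetoOptimal (S : Set (List V)) (Q : List V) : Prop :=
  Q ∈ S ∧ ¬ ∃ Q' ∈ S, walkCost w Q' < walkCost w Q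

def bellmanStep (T : V → Set (Fin k → ℝ≥0)) (v : V) : Set (Fin k → ℝ≥0) :=
  T v ∪ {x | ∃ u : V, E u v ∧ ∃ c ∈ T u, x = c + w u v}

variable {E w s}

theorem boundedWalks_mono {v : V} {ℓ ℓ' : ℕ} (h : ℓ ≤ ℓ') :
    boundedWalks E s v ℓ ⊆ boundedWalks E s v ℓ' :=
  fun _ hQ => ⟨hQ.1, hQ.2.trans h⟩

theorem append_singleton_mem_boundedWalks {u v : V} {ℓ : ℕ} {P : List V}
    (hP : P ∈ boundedWalks E s u ℓ) (he : E u v) :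
    P ++ [v] ∈ boundedWalks E s v (ℓ + 1) := by
  refine ⟨hP.1.append_singleton he, ?_⟩
  have := List.length_pos_iff.2 hP.1.1
  have := hP.2
  simp only [List.length_append, List.length_singleton]
  omega

theorem IsParetoOptimal.anti {S T : Set (List V)} {Q : List V} (h : IsParetoOptimal w T Q)
    (hST : S ⊆ T) (hQ : Q ∈ S) : IsParetoOptimal w S Q :=
  ⟨hQ, fun ⟨Q', hQ', hlt⟩ => h.2 ⟨Q', hST hQ', hlt⟩⟩

theorem IsParetoOptimal.of_append_singleton {u v : V} {ℓ : ℕ} {P : List V}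
    (h : IsParetoOptimal w (boundedWalks E s v (ℓ + 1)) (P ++ [v]))
    (hP : P ∈ boundedWalks E s u ℓ) (he : E u v) :
    IsParetoOptimal w (boundedWalks E s u ℓ) P := by
  refine ⟨hP, fun ⟨P', hP', hlt⟩ => h.2
    ⟨P' ++ [v], append_singleton_mem_boundedWalks hP' he, ?_⟩⟩
  rw [walkCost_append_singleton w v hP'.1.2.2.1, walkCost_append_singleton w v hP.1.2.2.1]
  exact add_lt_add_left hlt _

theorem bellmanStep_subset_walkCosts {T : V → Set (Fin k → ℝ≥0)} {ℓ : ℕ}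
    (hT : ∀ u, T u ⊆ walkCost w '' boundedWalks E s u ℓ) (v : V) :
    bellmanStep E w T v ⊆ walkCost w '' boundedWalks E s v (ℓ + 1) := by
  rintro c (hc | ⟨u, he, c, hc, rfl⟩)
  · exact Set.image_mono (boundedWalks_mono ℓ.le_succ) (hT v hc)
  · obtain ⟨P, hP, rfl⟩ := hT u hc
    exact ⟨P ++ [v], append_singleton_mem_boundedWalks hP he,
      walkCost_append_singleton w v hP.1.2.2.1⟩

theorem paretoTable_subset_walkCosts (D : ℕ → V → Set (Fin k → ℝ≥0))
    (hD0s : D 0 s = {0}) (hD0 : ∀ v : V, v ≠ s → D 0 v = ∅)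
    (hDstep : ∀ (ℓ : ℕ) (v : V), D (ℓ + 1) v = paretoFront (bellmanStep E w (D ℓ) v)) :
    ∀ ℓ v, D ℓ v ⊆ walkCost w '' boundedWalks E s v ℓ
  | 0, v => by
    by_cases hv : v = s
    · subst hv
      rw [hD0s, Set.singleton_subset_iff]
      exact ⟨[v], ⟨isWalk_singleton E v, le_rfl⟩, by simp [walkCost]⟩
    · simp [hD0 v hv]
  | ℓ + 1, v => (hDstep ℓ v).trans_subset <| Set.sep_subset _ _ |>.trans <|
      bellmanStep_subset_walkCosts (paretoTable_subset_walkCosts D hD0s hD0 hDstep ℓ) v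

end BoundedWalks

theorem paretoTable_complete_general {V : Type*}
    (E : V → V → Prop) {k : ℕ} (w : V → V → Fin k → ℝ≥0)
    (s : V) (D : ℕ → V → Set (Fin k → ℝ≥0))
    (hD0s : D 0 s = {0})
    (hD0 : ∀ v : V, v ≠ s → D 0 v = ∅)
    (hDstep : ∀ (ℓ : ℕ) (v : V), D (ℓ + 1) v =
      paretoFront (D ℓ v ∪ {x | ∃ u : V, E u v ∧ ∃ c ∈ D ℓ u, x = c + w u v})) :
    ∀ (ℓ : ℕ) (v : V) (Q : List V),
      IsWalk E s v Q → Q.length - 1 ≤ ℓ →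
      (¬ ∃ Q' : List V, (IsWalk E s v Q' ∧ Q'.length - 1 ≤ ℓ) ∧
        walkCost w Q' < walkCost w Q) →
      walkCost w Q ∈ D ℓ v := by
  have hsound := paretoTable_subset_walkCosts D hD0s hD0 hDstep
  intro ℓ
  induction ℓ with
  | zero =>
    intro v Q hQ hlen _
    obtain ⟨rfl, rfl⟩ := hQ.eq_singleton (by omega)
    simp [hD0s, walkCost]
  | succ ℓ ih =>
    intro v Q hQ hlen hopt
    have hQopt : IsParetoOptimal w (boundedWalks E s v (ℓ + 1)) Q := ⟨⟨hQ, hlen⟩, hopt⟩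
    rw [hDstep]
    refine ⟨?_, fun ⟨c, hc, hlt⟩ => ?_⟩
    · by_cases hshort : Q.length - 1 ≤ ℓ
      · have hQopt' := hQopt.anti (boundedWalks_mono ℓ.le_succ) ⟨hQ, hshort⟩
        exact Or.inl (ih v Q hQ hshort hQopt'.2)
      · obtain ⟨u, P, rfl, hP, he⟩ := hQ.exists_eq_append_singleton (by omega)
        have hPopt := hQopt.of_append_singleton ⟨hP, by simp at hlen; omega⟩ he
        exact Or.inr ⟨u, he, _, ih u P hP hPopt.1.2 hPopt.2,
          walkCost_append_singleton w v hP.2.2.1⟩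
    · obtain ⟨Q', hQ', rfl⟩ := bellmanStep_subset_walkCosts (hsound ℓ) v hc
      exact hopt ⟨Q', hQ', hlt⟩

/-- completeness of the Pareto tables: the cost of every walk
from `s` to `v` with at most `ℓ` edges that is Pareto optimal among all such
walks belongs to `D ℓ v`. -/
theorem paretoTable_complete {V : Type*} [Fintype V]
    (E : V → V → Prop) [DecidableRel E] {k : ℕ} (w : V → V → Fin k → ℝ≥0)
    (s : V) (D : ℕ → V → Set (Fin k → ℝ≥0))
    (hD0s : D 0 s = {0})
    (hD0 : ∀ v : V, v ≠ s → D 0 v = ∅)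
    (hDstep : ∀ (ℓ : ℕ) (v : V), D (ℓ + 1) v =
      paretoFront (D ℓ v ∪ {x | ∃ u : V, E u v ∧ ∃ c ∈ D ℓ u, x = c + w u v})) :
    ∀ (ℓ : ℕ) (v : V) (Q : List V),
      IsWalk E s v Q → Q.length - 1 ≤ ℓ →
      (¬ ∃ Q' : List V, (IsWalk E s v Q' ∧ Q'.length - 1 ≤ ℓ) ∧
        walkCost w Q' < walkCost w Q) →
      walkCost w Q ∈ D ℓ v :=
  paretoTable_complete_general E w s D hD0s hD0 hDstep
end

section
/- Monotone growth of reachable Pareto costs: for every vertex v : V and all ℓ ≤ ℓ', every element of D ℓ' v is dominated-or-equalled by no element obtained earlier and, conversely, for every c ∈ D ℓ v there exists c' ∈ D ℓ' v with c' ≤ c componentwise. In particular, the componentwise-minimal cost to reach v never increases as the hop bound ℓ grows. -/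
open scoped NNReal

/-!
Every table `D ℓ v` is an antichain: at `ℓ = 0` it has at most one element, afterwards it is a
Pareto front. All tables are finite, and every element of a finite set lies above some element
of its Pareto front; hence every entry of `D ℓ v` is dominated by an entry of `D (ℓ + 1) v`,
and by induction by an entry of `D ℓ' v`. If some `c ∈ D ℓ v` were strictly below `c' ∈ D ℓ' v`,
the entry of `D ℓ' v` below `c` would be strictly below `c'`, contradicting the antichain property.
-/

theorem exists_le_of_forall_exists_le_succ {α : Type*} [Preorder α] {T : ℕ → Set α}
    (hstep : ∀ n, ∀ c ∈ T n, ∃ c' ∈ T (n + 1), c' ≤ c) {m n : ℕ} (hmn : m ≤ n) :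
    ∀ c ∈ T m, ∃ c' ∈ T n, c' ≤ c := by
  induction n, hmn using Nat.le_induction with
  | base => exact fun c hc => ⟨c, hc, le_rfl⟩
  | succ n _ ih =>
    intro c hc
    obtain ⟨c₁, hc₁, hc₁c⟩ := ih c hc
    obtain ⟨c₂, hc₂, hc₂c₁⟩ := hstep n c₁ hc₁
    exact ⟨c₂, hc₂, hc₂c₁.trans hc₁c⟩

section ParetoFront

variable {k : ℕ} {S : Set (Fin k → ℝ≥0)}

theorem mem_paretoFront_iff {m : Fin k → ℝ≥0} : m ∈ paretoFront S ↔ Minimal (· ∈ S) m := by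
  simp only [minimal_iff_forall_lt, paretoFront, Set.mem_ofPred_eq, not_exists, not_and,
    imp_not_comm]

theorem paretoFront_subset : paretoFront S ⊆ S := fun _ hm => hm.1

theorem isAntichain_paretoFront : IsAntichain (· ≤ ·) (paretoFront S) :=
  fun _ ha _ hb hab hle => hb.2 ⟨_, ha.1, lt_of_le_of_ne hle hab⟩

theorem Set.Finite.exists_mem_paretoFront_le (hS : S.Finite) {c : Fin k → ℝ≥0} (hc : c ∈ S) :
    ∃ m ∈ paretoFront S, m ≤ c := by
  obtain ⟨m, hmc, hm⟩ := hS.isPWO.exists_le_minimal hc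
  exact ⟨m, mem_paretoFront_iff.2 hm, hmc⟩

end ParetoFront

section ParetoTable

variable {V : Type*} {E : V → V → Prop} {k : ℕ} {w : V → V → Fin k → ℝ≥0} {s : V}
  {D : ℕ → V → Set (Fin k → ℝ≥0)}

def relaxation (E : V → V → Prop) (w : V → V → Fin k → ℝ≥0) (T : V → Set (Fin k → ℝ≥0))
    (v : V) : Set (Fin k → ℝ≥0) :=
  {x | ∃ u : V, E u v ∧ ∃ c ∈ T u, x = c + w u v}

theorem finite_relaxation [Finite V] {T : V → Set (Fin k → ℝ≥0)} (hT : ∀ u, (T u).Finite)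
    (v : V) : (relaxation E w T v).Finite := by
  refine (Set.finite_iUnion fun u => (hT u).image (· + w u v)).subset ?_
  rintro x ⟨u, -, c, hc, rfl⟩
  exact Set.mem_iUnion.2 ⟨u, c, hc, rfl⟩

structure IsParetoTable (E : V → V → Prop) (w : V → V → Fin k → ℝ≥0) (s : V)
    (D : ℕ → V → Set (Fin k → ℝ≥0)) : Prop where
  zero_source : D 0 s = {0}
  zero_of_ne : ∀ v, v ≠ s → D 0 v = ∅
  succ : ∀ ℓ v, D (ℓ + 1) v = paretoFront (D ℓ v ∪ relaxation E w (D ℓ) v)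

namespace IsParetoTable

variable (hD : IsParetoTable E w s D)
include hD

theorem zero_subsingleton (v : V) : (D 0 v).Subsingleton := by
  by_cases hv : v = s
  · subst hv
    rw [hD.zero_source]
    exact Set.subsingleton_singleton
  · rw [hD.zero_of_ne v hv]
    exact Set.subsingleton_empty

theorem isAntichain : ∀ ℓ v, IsAntichain (· ≤ ·) (D ℓ v)
  | 0, v => (hD.zero_subsingleton v).isAntichain _
  | ℓ + 1, v => hD.succ ℓ v ▸ isAntichain_paretoFront

theorem finite [Finite V] (ℓ : ℕ) : ∀ v, (D ℓ v).Finite := by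
  induction ℓ with
  | zero => exact fun v => (hD.zero_subsingleton v).finite
  | succ ℓ ih =>
    intro v
    rw [hD.succ]
    exact ((ih v).union (finite_relaxation ih v)).subset paretoFront_subset

theorem exists_le_succ [Finite V] (ℓ : ℕ) (v : V) :
    ∀ c ∈ D ℓ v, ∃ c' ∈ D (ℓ + 1) v, c' ≤ c := fun _ hc =>
  hD.succ ℓ v ▸
    ((hD.finite ℓ v).union (finite_relaxation (hD.finite ℓ) v)).exists_mem_paretoFront_le
      (Or.inl hc)

theorem exists_le_of_le [Finite V] {ℓ ℓ' : ℕ} (hℓ : ℓ ≤ ℓ') (v : V) :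
    ∀ c ∈ D ℓ v, ∃ c' ∈ D ℓ' v, c' ≤ c :=
  exists_le_of_forall_exists_le_succ (T := (D · v)) (fun n => hD.exists_le_succ n v) hℓ

end IsParetoTable

end ParetoTable

theorem paretoTable_monotone_general {V : Type*} [Fintype V]
    (E : V → V → Prop) {k : ℕ} (w : V → V → Fin k → ℝ≥0)
    (s : V) (D : ℕ → V → Set (Fin k → ℝ≥0))
    (hD0s : D 0 s = {0})
    (hD0 : ∀ v : V, v ≠ s → D 0 v = ∅)
    (hDstep : ∀ (ℓ : ℕ) (v : V), D (ℓ + 1) v =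
      paretoFront (D ℓ v ∪ {x | ∃ u : V, E u v ∧ ∃ c ∈ D ℓ u, x = c + w u v})) :
    ∀ (ℓ ℓ' : ℕ), ℓ ≤ ℓ' → ∀ v : V,
      (∀ c' ∈ D ℓ' v, ¬ ∃ c ∈ D ℓ v, c < c') ∧
      (∀ c ∈ D ℓ v, ∃ c' ∈ D ℓ' v, c' ≤ c) := by
  have hD : IsParetoTable E w s D := ⟨hD0s, hD0, hDstep⟩
  intro ℓ ℓ' hℓ v
  refine ⟨?_, hD.exists_le_of_le hℓ v⟩
  rintro c' hc' ⟨c, hc, hcc'⟩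
  obtain ⟨c'', hc'', hc''c⟩ := hD.exists_le_of_le hℓ v c hc
  exact (hD.isAntichain ℓ' v).not_lt hc'' hc' (hc''c.trans_lt hcc')

/-- monotone growth of reachable Pareto costs: for `ℓ ≤ ℓ'`,
no element of `D ℓ' v` is dominated by an element of `D ℓ v`, and every
element of `D ℓ v` is dominated-or-equalled by some element of `D ℓ' v`;
in particular the componentwise-minimal cost to reach `v` never increases
as the hop bound grows. -/
theorem paretoTable_monotone {V : Type*} [Fintype V]
    (E : V → V → Prop) [DecidableRel E] {k : ℕ} (w : V → V → Fin k → ℝ≥0)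
    (s : V) (D : ℕ → V → Set (Fin k → ℝ≥0))
    (hD0s : D 0 s = {0})
    (hD0 : ∀ v : V, v ≠ s → D 0 v = ∅)
    (hDstep : ∀ (ℓ : ℕ) (v : V), D (ℓ + 1) v =
      paretoFront (D ℓ v ∪ {x | ∃ u : V, E u v ∧ ∃ c ∈ D ℓ u, x = c + w u v})) :
    ∀ (ℓ ℓ' : ℕ), ℓ ≤ ℓ' → ∀ v : V,
      (∀ c' ∈ D ℓ' v, ¬ ∃ c ∈ D ℓ v, c < c') ∧
      (∀ c ∈ D ℓ v, ∃ c' ∈ D ℓ' v, c' ≤ c) :=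
  paretoTable_monotone_general E w s D hD0s hD0 hDstep
end
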